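/- Let n be a prime with n ≡ ±1 (mod 8) and let C_1 be the binary quadratic residue code of length n with non-zeroes the quadratic residues T_1. Then dim C_1 = (n-1)/2 and d(C_1)² ≥ n (the square-root bound). -/

import Mathlib

def cEval {n : ℕ} [NeZero n] {K E : Type*} [CommRing K] [CommRing E]
    (f : K →+* E) (α : E) (c : ZMod n → K) (j : ZMod n) : E :=
  ∑ i : ZMod n, f (c i) * α ^ (i * j).val

def nonzeroes {n : ℕ} [NeZero n] {K E : Type*} [CommRing K] [CommRing E]
    (f : K →+* E) (α : E) (C : Set (ZMod n → K)) : Set (ZMod n) :=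
  {j | ∃ c ∈ C, cEval f α c j ≠ 0}

def IsShiftClosed {n : ℕ} {K : Type*} [CommRing K] (C : Set (ZMod n → K)) : Prop :=
  ∀ c ∈ C, (fun i => c (i - 1)) ∈ C

noncomputable def minDist {ι K : Type*} [Fintype ι] [DecidableEq K] [Zero K]
    (C : Set (ι → K)) : ℕ :=
  sInf {d | ∃ c ∈ C, c ≠ 0 ∧ hammingNorm c = d}

/-!
Identify a word `c` with `∑ cᵢ Xⁱ`, and a polynomial with its coefficient word, exponents read
mod `n`. The polynomials whose word lies in a shift-closed code `C` form an ideal of `K[X]`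
containing `Xⁿ - 1`. If `D` is its monic generator, `C` is the image of `D · K[X]_{< n - deg D}`, so
`dim C = n - deg D`. Over `E`, `D` divides `Xⁿ - 1` and so splits with simple roots, namely the `αʲ`
with `j` not a nonzero of `C`. Hence `dim C` is the number of nonzeroes, here `(n - 1) / 2`.

For the bound, translate a minimum weight word `a` so that `a 0 ≠ 0` and apply `j ↦ -1/j` (an
automorphism of the extended quadratic residue code), dropping coordinate `0`. In characteristic
`2` the transform of the resulting word `v` vanishes at every nonsquare, since the Kloosterman sums
that appear cancel in pairs, but not at `0`. Dilating `v` by a nonsquare gives `w`, whose transform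
vanishes at the nonzero squares, so the convolution `v * w` is a nonzero constant word: the supports
of `v` and `w` add up to all of `ZMod n`, and `n ≤ wt v · wt w ≤ (wt a)²`.
-/

open Finset Polynomial

section Transform

variable {n : ℕ} [NeZero n] {K E : Type*} [CommRing K] [CommRing E] (f : K →+* E) {α : E}

lemma pow_val_add (h1 : α ^ n = 1) (x y : ZMod n) : α ^ (x + y).val = α ^ x.val * α ^ y.val :=
  AddChar.map_add_eq_mul (AddChar.zmodChar n h1) x y

lemma cEval_add (c c' : ZMod n → K) (j : ZMod n) :
    cEval f α (c + c') j = cEval f α c j + cEval f α c' j := by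
  simp only [cEval, Pi.add_apply, map_add, add_mul, sum_add_distrib]

lemma cEval_zero_right (c : ZMod n → K) : cEval f α c 0 = f (∑ i, c i) := by
  simp [cEval]

lemma cEval_single (h1 : α ^ n = 1) (m : ℕ) (a : K) (j : ZMod n) :
    cEval f α (Pi.single (m : ZMod n) a) j = f a * (α ^ j.val) ^ m := by
  rw [cEval, sum_eq_single (m : ZMod n) (fun i _ hi => by simp [hi]) (by simp),
    Pi.single_eq_same, ← nsmul_eq_mul]
  exact congrArg _ (AddChar.map_nsmul_eq_pow (AddChar.zmodChar n h1) m j)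

lemma cEval_translate (h1 : α ^ n = 1) (c : ZMod n → K) (s j : ZMod n) :
    cEval f α (fun i => c (i + s)) j = α ^ (-(s * j)).val * cEval f α c j := by
  rw [cEval, cEval, mul_sum]
  refine Fintype.sum_equiv (Equiv.addRight s) _ _ fun i => ?_
  rw [Equiv.coe_addRight, mul_left_comm, ← pow_val_add h1]
  ring_nf

lemma cEval_dilate (c : ZMod n → K) (u : (ZMod n)ˣ) (j : ZMod n) :
    cEval f α (fun i => c (((u⁻¹ : (ZMod n)ˣ) : ZMod n) * i)) j = cEval f α c (u * j) := by
  refine Fintype.sum_equiv (Units.mulLeft u⁻¹) _ _ fun i => ?_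
  rw [Units.mulLeft_apply, mul_mul_mul_comm, Units.inv_mul, one_mul]

lemma cEval_conv (h1 : α ^ n = 1) (v w : ZMod n → K) (j : ZMod n) :
    cEval f α (fun k => ∑ i, v i * w (k - i)) j = cEval f α v j * cEval f α w j := by
  rw [cEval, cEval, cEval, sum_mul_sum]
  simp only [map_sum, map_mul, sum_mul]
  rw [sum_comm]
  refine sum_congr rfl fun i _ => Fintype.sum_equiv (Equiv.subRight i) _ _ fun k => ?_
  rw [Equiv.subRight_apply, mul_mul_mul_comm, ← pow_val_add h1]
  ring_nf

lemma cEval_inversion [IsDomain E] (hα : IsPrimitiveRoot α n) (c : ZMod n → K) (t : ZMod n) :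
    ∑ m, cEval f α c m * α ^ (-(t * m)).val = n * f (c t) := by
  have hψ := AddChar.zmodChar_primitive_of_primitive_root n hα
  calc ∑ m, cEval f α c m * α ^ (-(t * m)).val
      = ∑ i, f (c i) * ∑ m, AddChar.zmodChar n hα.pow_eq_one (m * (i - t)) := by
        simp only [cEval, sum_mul, mul_sum]
        rw [sum_comm]
        refine sum_congr rfl fun i _ => sum_congr rfl fun m _ => ?_
        rw [mul_assoc, ← pow_val_add hα.pow_eq_one]
        ring_nf; rfl
    _ = n * f (c t) := by
        simp_rw [AddChar.sum_mulShift _ hψ]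
        simp [sub_eq_zero, mul_comm]

end Transform

section CyclicCode

variable {n : ℕ} {K : Type*} [CommRing K]

variable (n) in
noncomputable def wordOfPoly : K[X] →ₗ[K] (ZMod n → K) :=
  lsum fun m => LinearMap.single K (fun _ => K) (m : ZMod n)

lemma wordOfPoly_monomial (m : ℕ) (a : K) :
    wordOfPoly n (monomial m a) = Pi.single (m : ZMod n) a := by
  simp [wordOfPoly]

lemma wordOfPoly_X_mul (P : K[X]) : wordOfPoly n (X * P) = fun i => wordOfPoly n P (i - 1) := by
  induction P using Polynomial.induction_on' with
  | add P Q hP hQ => rw [mul_add, map_add, map_add, hP, hQ]; rfl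
  | monomial m a =>
    ext i
    simp only [X_mul_monomial, wordOfPoly_monomial, Pi.single_apply, Nat.cast_succ,
      sub_eq_iff_eq_add]

lemma wordOfPoly_X_pow_sub_one : wordOfPoly n (X ^ n - 1 : K[X]) = 0 := by
  rw [map_sub, ← monomial_one_right_eq_X_pow, ← monomial_zero_one, wordOfPoly_monomial,
    wordOfPoly_monomial, ZMod.natCast_self, Nat.cast_zero, sub_self]

lemma wordOfPoly_mul_mem {C : Submodule K (ZMod n → K)} (hC : IsShiftClosed (C : Set (ZMod n → K)))
    (Q : K[X]) {P : K[X]} (hP : wordOfPoly n P ∈ C) : wordOfPoly n (Q * P) ∈ C := by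
  induction Q using Polynomial.induction_on with
  | C a => rw [← smul_eq_C_mul, map_smul]; exact C.smul_mem a hP
  | add Q R hQ hR => rw [add_mul, map_add]; exact C.add_mem hQ hR
  | monomial k a ih =>
    rw [pow_succ, ← mul_assoc, mul_comm _ X, mul_assoc, wordOfPoly_X_mul]
    exact hC _ ih

noncomputable def codeIdeal (C : Submodule K (ZMod n → K))
    (hC : IsShiftClosed (C : Set (ZMod n → K))) : Ideal K[X] where
  __ := (C.comap (wordOfPoly n)).toAddSubmonoid
  smul_mem' Q _ hP := wordOfPoly_mul_mem hC Q hP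

variable {C : Submodule K (ZMod n → K)} {hC : IsShiftClosed (C : Set (ZMod n → K))} {D : K[X]}

lemma mem_codeIdeal {P : K[X]} : P ∈ codeIdeal C hC ↔ wordOfPoly n P ∈ C :=
  Iff.rfl

lemma wordOfPoly_mem_iff_dvd (hJ : codeIdeal C hC = Ideal.span {D}) (P : K[X]) :
    wordOfPoly n P ∈ C ↔ D ∣ P := by
  rw [← mem_codeIdeal (hC := hC), hJ, Ideal.mem_span_singleton]

lemma dvd_X_pow_sub_one_of_codeIdeal_eq (hJ : codeIdeal C hC = Ideal.span {D}) : D ∣ X ^ n - 1 :=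
  (wordOfPoly_mem_iff_dvd hJ _).1 (by rw [wordOfPoly_X_pow_sub_one]; exact C.zero_mem)

variable [NeZero n]

noncomputable def polyOfWord : (ZMod n → K) →ₗ[K] K[X] :=
  ∑ i, monomial i.val ∘ₗ LinearMap.proj i

lemma polyOfWord_apply (c : ZMod n → K) : polyOfWord c = ∑ i, monomial i.val (c i) := by
  simp [polyOfWord]

lemma polyOfWord_single (i : ZMod n) (a : K) : polyOfWord (Pi.single i a) = monomial i.val a := by
  rw [polyOfWord_apply, sum_eq_single i (fun j _ hj => by rw [Pi.single_eq_of_ne hj, map_zero])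
    (by simp), Pi.single_eq_same]

lemma polyOfWord_mem_degreeLT (c : ZMod n → K) : polyOfWord c ∈ degreeLT K n := by
  rw [polyOfWord_apply]
  exact Submodule.sum_mem _ fun i _ => mem_degreeLT.2 ((degree_monomial_le _ _).trans_lt
    (by exact_mod_cast i.val_lt))

lemma wordOfPoly_polyOfWord (c : ZMod n → K) : wordOfPoly n (polyOfWord c) = c := by
  conv_lhs => rw [← Finset.univ_sum_single c]
  simp only [map_sum, polyOfWord_single, wordOfPoly_monomial, ZMod.natCast_zmod_val]
  exact univ_sum_single c

lemma polyOfWord_wordOfPoly [Nontrivial K] {P : K[X]} (hP : P ∈ degreeLT K n) :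
    polyOfWord (wordOfPoly n P) = P := by
  have hdeg : P.natDegree < n := by
    rcases eq_or_ne P 0 with rfl | hP0
    · exact Nat.pos_of_neZero n
    · exact (natDegree_lt_iff_degree_lt hP0).2 (mem_degreeLT.1 hP)
  conv_rhs => rw [as_sum_range' P n hdeg]
  conv_lhs => rw [as_sum_range' P n hdeg]
  simp only [map_sum, wordOfPoly_monomial, polyOfWord_single]
  refine sum_congr rfl fun m hm => ?_
  rw [ZMod.val_natCast_of_lt (mem_range.1 hm)]

lemma eval_map_pow_val {E : Type*} [CommRing E] (f : K →+* E) {α : E} (h1 : α ^ n = 1)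
    (P : K[X]) (j : ZMod n) : (P.map f).eval (α ^ j.val) = cEval f α (wordOfPoly n P) j := by
  induction P using Polynomial.induction_on' with
  | add P Q hP hQ => rw [Polynomial.map_add, eval_add, hP, hQ, map_add, cEval_add]
  | monomial m a => rw [map_monomial, eval_monomial, wordOfPoly_monomial, cEval_single f h1]

lemma Polynomial.Monic.mul_mem_degreeLT_iff [Nontrivial K] {Q : K[X]} (hD : D.Monic) {m : ℕ}
    (hm : D.natDegree ≤ m) : D * Q ∈ degreeLT K m ↔ Q ∈ degreeLT K (m - D.natDegree) := by
  rcases eq_or_ne Q 0 with rfl | hQ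
  · simp only [mul_zero, Submodule.zero_mem]
  · rw [mem_degreeLT, mem_degreeLT, ← natDegree_lt_iff_degree_lt hQ,
      ← natDegree_lt_iff_degree_lt (hD.mul_right_ne_zero hQ), hD.natDegree_mul' hQ]
    omega

lemma finrank_eq_sub_natDegree [IsDomain K] (hD : D.Monic)
    (hJ : codeIdeal C hC = Ideal.span {D}) : Module.finrank K C = n - D.natDegree := by
  have hDn : D.natDegree ≤ n := by
    have hdvd := dvd_X_pow_sub_one_of_codeIdeal_eq hJ
    rw [← C_1] at hdvd
    exact (natDegree_le_of_dvd hdvd (X_pow_sub_C_ne_zero (Nat.pos_of_neZero n) 1)).trans_eq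
      natDegree_X_pow_sub_C
  set L := degreeLT K (n - D.natDegree)
  let Φ : L →ₗ[K] ZMod n → K := wordOfPoly n ∘ₗ LinearMap.mulLeft K D ∘ₗ L.subtype
  have hΦ : Function.Injective Φ := by
    rw [← LinearMap.ker_eq_bot, LinearMap.ker_eq_bot']
    intro Q hQ
    have hDQ : D * Q = 0 := by
      rw [← polyOfWord_wordOfPoly ((hD.mul_mem_degreeLT_iff hDn).2 Q.2)]
      exact (congrArg polyOfWord hQ).trans (map_zero _)
    exact Subtype.ext ((hD.mul_right_eq_zero_iff).1 hDQ)
  have hrange : LinearMap.range Φ = C := by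
    ext c
    constructor
    · rintro ⟨Q, rfl⟩
      exact (wordOfPoly_mem_iff_dvd hJ _).2 (dvd_mul_right D Q)
    · intro hc
      obtain ⟨Q, hQ⟩ := (wordOfPoly_mem_iff_dvd hJ _).1 ((wordOfPoly_polyOfWord c).symm ▸ hc)
      have hQL : Q ∈ L := (hD.mul_mem_degreeLT_iff hDn).1 (hQ ▸ polyOfWord_mem_degreeLT c)
      exact ⟨⟨Q, hQL⟩, (congrArg (wordOfPoly n) hQ.symm).trans (wordOfPoly_polyOfWord c)⟩
  rw [← hrange, LinearMap.finrank_range_of_inj hΦ, (degreeLTEquiv K _).finrank_eq,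
    Module.finrank_fin_fun]

end CyclicCode

lemma Polynomial.exists_monic_span_eq {K : Type*} [Field K] {J : Ideal K[X]} (hJ : J ≠ ⊥) :
    ∃ D : K[X], D.Monic ∧ J = Ideal.span {D} := by
  classical
  obtain ⟨g, rfl⟩ := (IsPrincipalIdealRing.principal J).principal
  have hg : g ≠ 0 := by rintro rfl; exact hJ (Ideal.span_singleton_eq_bot.2 rfl)
  exact ⟨normalize g, monic_normalize hg,
    (Ideal.span_singleton_eq_span_singleton.2 (normalize_associated g)).symm⟩

section Dimension

variable {n : ℕ} [NeZero n] {K E : Type*} [Field K] [Field E] (f : K →+* E) {α : E}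
  {C : Submodule K (ZMod n → K)} {hC : IsShiftClosed (C : Set (ZMod n → K))} {D : K[X]}

lemma isRoot_map_pow_val_iff (h1 : α ^ n = 1) (hJ : codeIdeal C hC = Ideal.span {D})
    (j : ZMod n) : (D.map f).IsRoot (α ^ j.val) ↔ j ∉ nonzeroes f α (C : Set (ZMod n → K)) := by
  rw [IsRoot.def, eval_map_pow_val f h1]
  constructor
  · rintro hroot ⟨c, hc, hcj⟩
    obtain ⟨Q, hQ⟩ := (wordOfPoly_mem_iff_dvd hJ _).1 ((wordOfPoly_polyOfWord c).symm ▸ hc)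
    apply hcj
    rw [← wordOfPoly_polyOfWord c, ← eval_map_pow_val f h1, hQ, Polynomial.map_mul, eval_mul,
      eval_map_pow_val f h1, hroot, zero_mul]
  · intro hj
    by_contra h
    exact hj ⟨_, (wordOfPoly_mem_iff_dvd hJ D).2 dvd_rfl, h⟩

lemma natDegree_eq_ncard_compl_nonzeroes (hα : IsPrimitiveRoot α n)
    (hJ : codeIdeal C hC = Ideal.span {D}) :
    D.natDegree = (nonzeroes f α (C : Set (ZMod n → K)))ᶜ.ncard := by
  classical
  have hXn : (X ^ n - 1 : E[X]) ≠ 0 := by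
    rw [← C_1]; exact X_pow_sub_C_ne_zero (Nat.pos_of_neZero n) 1
  have hdvd : D.map f ∣ X ^ n - 1 := by
    simpa using Polynomial.map_dvd f (dvd_X_pow_sub_one_of_codeIdeal_eq hJ)
  have hsplit : (D.map f).Splits := (X_pow_sub_one_splits hα).of_dvd hXn hdvd
  have hsep : (D.map f).Separable :=
    (X_pow_sub_one_separable_iff.2 hα.neZero'.out).of_dvd hdvd
  have hroots : ((D.map f).roots.toFinset : Set E) =
      (fun j : ZMod n => α ^ j.val) '' (nonzeroes f α (C : Set (ZMod n → K)))ᶜ := by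
    ext z
    rw [Finset.mem_coe, Multiset.mem_toFinset, mem_roots (ne_zero_of_dvd_ne_zero hXn hdvd)]
    constructor
    · intro hz
      have hz1 : z ^ n = 1 := by simpa [sub_eq_zero] using hz.dvd hdvd
      obtain ⟨i, hi, rfl⟩ := hα.eq_pow_of_pow_eq_one hz1
      refine ⟨i, ?_, by simp only [ZMod.val_natCast_of_lt hi]⟩
      rw [Set.mem_compl_iff, ← isRoot_map_pow_val_iff f hα.pow_eq_one hJ,
        ZMod.val_natCast_of_lt hi]
      exact hz
    · rintro ⟨j, hj, rfl⟩
      exact (isRoot_map_pow_val_iff f hα.pow_eq_one hJ j).2 hj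
  have hinj : Function.Injective fun j : ZMod n => α ^ j.val := fun j k h =>
    ZMod.val_injective n (hα.pow_inj j.val_lt k.val_lt h)
  rw [← natDegree_map f, hsplit.natDegree_eq_card_roots,
    ← Multiset.toFinset_card_of_nodup (nodup_roots hsep), ← Set.ncard_coe_finset, hroots,
    Set.ncard_image_of_injective _ hinj]

theorem finrank_eq_ncard_nonzeroes (hα : IsPrimitiveRoot α n)
    (hC : IsShiftClosed (C : Set (ZMod n → K))) :
    Module.finrank K C = (nonzeroes f α (C : Set (ZMod n → K))).ncard := by
  have hJ : codeIdeal C hC ≠ ⊥ := fun h => by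
    have hmem : (X ^ n - 1 : K[X]) ∈ codeIdeal C hC := by
      rw [mem_codeIdeal, wordOfPoly_X_pow_sub_one]; exact C.zero_mem
    rw [h, Ideal.mem_bot, ← C_1] at hmem
    exact X_pow_sub_C_ne_zero (Nat.pos_of_neZero n) 1 hmem
  obtain ⟨D, hD, hJD⟩ := exists_monic_span_eq hJ
  have hcard := Set.ncard_add_ncard_compl (nonzeroes f α (C : Set (ZMod n → K)))
  rw [Nat.card_zmod] at hcard
  rw [finrank_eq_sub_natDegree hD hJD, natDegree_eq_ncard_compl_nonzeroes f hα hJD]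
  omega

end Dimension

lemma hammingNorm_comp_equiv {ι κ β : Type*} [Fintype ι] [Fintype κ] [Zero β] [DecidableEq β]
    (x : ι → β) (e : κ ≃ ι) : hammingNorm (x ∘ e) = hammingNorm x :=
  card_equiv e (by simp)

open Pointwise in
lemma card_le_hammingNorm_mul_hammingNorm {G R : Type*} [AddCommGroup G] [Fintype G]
    [DecidableEq G] [Semiring R] [DecidableEq R] (v w : G → R)
    (h : ∀ k, ∑ i, v i * w (k - i) ≠ 0) : Fintype.card G ≤ hammingNorm v * hammingNorm w := by
  have hcover : univ ⊆ univ.filter (v · ≠ 0) + univ.filter (w · ≠ 0) := fun k _ => by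
    obtain ⟨i, -, hi⟩ := exists_ne_zero_of_sum_ne_zero (h k)
    rw [← add_sub_cancel i k]
    exact add_mem_add (by simpa using left_ne_zero_of_mul hi)
      (by simpa using right_ne_zero_of_mul hi)
  exact (card_le_card hcover).trans card_add_le

lemma sum_addChar_mul_add_mul_inv_eq_zero {F R : Type*} [Field F] [Fintype F] [DecidableEq F]
    [CommRing R] [CharP R 2] (ψ : AddChar F R) {a b : F} (hab : ¬IsSquare (a * b)) :
    ∑ t ∈ univ.erase 0, ψ (a * t + b * t⁻¹) = 0 := by
  have ha : a ≠ 0 := by rintro rfl; exact hab ⟨0, by simp⟩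
  have hb : b ≠ 0 := by rintro rfl; exact hab ⟨0, by simp⟩
  refine sum_involution (fun t _ => b * (a * t)⁻¹) (fun t ht => ?_) (fun t ht _ => ?_)
    (fun t ht => ?_) (fun t ht => ?_) <;> have ht0 : t ≠ 0 := ne_of_mem_erase ht
  · have harg : a * (b * (a * t)⁻¹) + b * (b * (a * t)⁻¹)⁻¹ = a * t + b * t⁻¹ := by
      field_simp
      ring
    rw [harg, CharTwo.add_self_eq_zero]
  · intro h
    refine hab ⟨a * t, ?_⟩
    field_simp at h
    linear_combination a * h
  · simp [ha, hb, ht0]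
  · field_simp

lemma ZMod.ncard_nonzero_squares {p : ℕ} [Fact p.Prime] (hp2 : p ≠ 2) :
    {x : ZMod p | ∃ a, a ≠ 0 ∧ x = a ^ 2}.ncard = (p - 1) / 2 := by
  classical
  set S : Finset (ZMod p) := univ.erase 0
  have hset : {x : ZMod p | ∃ a, a ≠ 0 ∧ x = a ^ 2} = (S.image (· ^ 2) : Set (ZMod p)) := by
    ext x; simp [S, eq_comm]
  have hfiber : ∀ b ∈ S.image (· ^ 2), #{a ∈ S | a ^ 2 = b} = 2 := by
    simp only [mem_image]
    rintro _ ⟨c, hc, rfl⟩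
    have hc0 : c ≠ 0 := ne_of_mem_erase hc
    have : {a ∈ S | a ^ 2 = c ^ 2} = {c, -c} := by
      ext a
      simp only [S, mem_filter, mem_erase, mem_univ, and_true, sq_eq_sq_iff_eq_or_eq_neg,
        mem_insert, mem_singleton]
      constructor
      · exact fun h => h.2
      · rintro (rfl | rfl) <;> simp [hc0]
    rw [this, card_pair_eq_two_iff]
    exact ZMod.ne_neg_self ((Fact.out : p.Prime).odd_of_ne_two hp2) hc0
  have hcard := card_eq_sum_card_image (· ^ 2) S
  rw [sum_congr rfl hfiber, sum_const, smul_eq_mul, card_erase_of_mem (mem_univ _), card_univ,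
    ZMod.card] at hcard
  rw [hset, Set.ncard_coe_finset]
  omega

lemma IsPrimitiveRoot.ne_two_of_charP_two {E : Type*} [CommRing E] [IsDomain E] [CharP E 2]
    {α : E} {n : ℕ} [NeZero n] (hα : IsPrimitiveRoot α n) : n ≠ 2 := by
  rintro rfl
  exact hα.neZero'.out (by exact_mod_cast CharP.cast_eq_zero E 2)

section SquareRootBound

variable {p : ℕ} [Fact p.Prime] {K E : Type*} [CommRing K] [Field E] (f : K →+* E) {α : E}

-- `j ↦ -1/j` rather than `j ↦ 1/j`: the Kloosterman sums in `cEval_invertWord_eq_zero` then have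
-- parameters with nonsquare product whatever `p` is mod `4`.
def invertWord (a : ZMod p → K) : ZMod p → K :=
  Function.update (fun j => a (-j⁻¹)) 0 0

lemma neg_inv_involutive : Function.Involutive fun j : ZMod p => -j⁻¹ := fun j => by
  simp only [inv_neg, neg_neg, inv_inv]

lemma hammingNorm_invertWord_le [DecidableEq K] (a : ZMod p → K) :
    hammingNorm (invertWord a) ≤ hammingNorm a := by
  rw [← hammingNorm_comp_equiv a neg_inv_involutive.toPerm]
  refine card_le_card (monotone_filter_right _ fun j _ hj => ?_)
  by_cases hj0 : j = 0
  · simp [invertWord, hj0] at hj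
  · simpa [invertWord, hj0] using hj

lemma cEval_invertWord (a : ZMod p → K) (k : ZMod p) :
    cEval f α (invertWord a) k = ∑ t ∈ univ.erase 0, f (a t) * α ^ (-(t⁻¹ * k)).val := by
  rw [cEval, ← sum_erase (a := 0) univ (by simp [invertWord])]
  refine sum_equiv neg_inv_involutive.toPerm (by simp) fun j hj => ?_
  simp [invertWord, ne_of_mem_erase hj]

lemma cEval_invertWord_zero {a : ZMod p → K} (ha : ∑ i, a i = 0) :
    cEval f α (invertWord a) 0 = -f (a 0) := by
  simp only [cEval_invertWord, mul_zero, neg_zero, ZMod.val_zero, pow_zero, mul_one,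
    ← map_sum, sum_erase_eq_sub (mem_univ _), ha, map_zero, zero_sub]

lemma cEval_invertWord_eq_zero [CharP E 2] (hα : IsPrimitiveRoot α p) {a : ZMod p → K}
    (ha : ∀ m, cEval f α a m ≠ 0 → m ≠ 0 ∧ IsSquare m) {k : ZMod p} (hk : ¬IsSquare k) :
    cEval f α (invertWord a) k = 0 := by
  refine (mul_eq_zero.1 ?_).resolve_left hα.neZero'.out
  calc (p : E) * cEval f α (invertWord a) k
      = ∑ m, cEval f α a m *
          ∑ t ∈ univ.erase 0, AddChar.zmodChar p hα.pow_eq_one (-m * t + -k * t⁻¹) := by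
        simp only [cEval_invertWord, mul_sum, ← mul_assoc, ← cEval_inversion f hα, sum_mul]
        rw [sum_comm]
        refine sum_congr rfl fun m _ => sum_congr rfl fun t _ => ?_
        rw [mul_assoc, ← pow_val_add hα.pow_eq_one]
        ring_nf; rfl
    _ = 0 := by
        refine sum_eq_zero fun m _ => ?_
        by_cases hm : cEval f α a m = 0
        · rw [hm, zero_mul]
        · obtain ⟨hm0, hmsq⟩ := ha m hm
          refine mul_eq_zero_of_right _ (sum_addChar_mul_add_mul_inv_eq_zero _ fun hsq => hk ?_)
          rw [neg_mul_neg] at hsq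
          simpa [hm0] using hsq.div hmsq

lemma le_sq_hammingNorm_of_cEval_eq_zero_of_not_isSquare [DecidableEq K] (hp2 : p ≠ 2)
    (hα : IsPrimitiveRoot α p) {v : ZMod p → K} (hv0 : cEval f α v 0 ≠ 0)
    (hv : ∀ k, ¬IsSquare k → cEval f α v k = 0) : p ≤ hammingNorm v ^ 2 := by
  obtain ⟨μ, hμ⟩ := FiniteField.exists_nonsquare (F := ZMod p) (by rwa [ZMod.ringChar_zmod_n])
  have hμ0 : μ ≠ 0 := by rintro rfl; exact hμ ⟨0, by simp⟩
  set u := Units.mk0 μ hμ0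
  set w : ZMod p → K := fun i => v (((u⁻¹ : (ZMod p)ˣ) : ZMod p) * i)
  have hprod : ∀ m, m ≠ 0 → cEval f α v m * cEval f α w m = 0 := fun m hm => by
    rw [cEval_dilate, Units.val_mk0]
    by_cases hmsq : IsSquare m
    · refine mul_eq_zero_of_right _ (hv _ fun hsq => hμ ?_)
      simpa [hm] using hsq.div hmsq
    · exact mul_eq_zero_of_left (hv m hmsq) _
  have hconv : ∀ k, ∑ i, v i * w (k - i) ≠ 0 := fun k hk => by
    have := cEval_inversion f hα (fun k => ∑ i, v i * w (k - i)) k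
    rw [hk, map_zero, mul_zero, sum_eq_single 0 (fun m _ hm => by
      rw [cEval_conv f hα.pow_eq_one, hprod m hm, zero_mul]) (by simp),
      cEval_conv f hα.pow_eq_one] at this
    rw [mul_zero, neg_zero, ZMod.val_zero, pow_zero, mul_one, cEval_dilate, mul_zero] at this
    exact mul_ne_zero hv0 hv0 this
  have hw : hammingNorm w = hammingNorm v := hammingNorm_comp_equiv v (Units.mulLeft u⁻¹)
  simpa [sq, hw] using card_le_hammingNorm_mul_hammingNorm v w hconv

theorem le_sq_hammingNorm_of_cEval_ne_zero {K : Type*} [Field K] [DecidableEq K] (f : K →+* E)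
    [CharP E 2] (hα : IsPrimitiveRoot α p) {a : ZMod p → K} (ha0 : a ≠ 0)
    (ha : ∀ j, cEval f α a j ≠ 0 → j ≠ 0 ∧ IsSquare j) : p ≤ hammingNorm a ^ 2 := by
  obtain ⟨s, hs⟩ := Function.ne_iff.1 ha0
  set a' : ZMod p → K := fun i => a (i + s)
  have ha' : ∀ j, cEval f α a' j ≠ 0 → j ≠ 0 ∧ IsSquare j := fun j hj =>
    ha j (right_ne_zero_of_mul (cEval_translate f hα.pow_eq_one a s j ▸ hj))
  have hsum : ∑ i, a' i = 0 := by
    by_contra h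
    exact (ha' 0 (by rw [cEval_zero_right]; exact (_root_.map_ne_zero f).2 h)).1 rfl
  have hv0 : cEval f α (invertWord a') 0 ≠ 0 := by
    rw [cEval_invertWord_zero f hsum, neg_ne_zero, _root_.map_ne_zero]
    simpa [a'] using hs
  calc p ≤ hammingNorm (invertWord a') ^ 2 :=
        le_sq_hammingNorm_of_cEval_eq_zero_of_not_isSquare f hα.ne_two_of_charP_two hα hv0
          fun k hk => cEval_invertWord_eq_zero f hα ha' hk
    _ ≤ hammingNorm a' ^ 2 := Nat.pow_le_pow_left (hammingNorm_invertWord_le a') 2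
    _ = hammingNorm a ^ 2 := by rw [← hammingNorm_comp_equiv a (Equiv.addRight s)]; rfl

end SquareRootBound

lemma exists_hammingNorm_eq_minDist {ι K : Type*} [Fintype ι] [DecidableEq K] [Zero K]
    {C : Set (ι → K)} (h : ∃ c ∈ C, c ≠ 0) : ∃ c ∈ C, c ≠ 0 ∧ hammingNorm c = minDist C := by
  obtain ⟨c, hc, hc0⟩ := h
  exact Nat.sInf_mem (s := {d | ∃ c ∈ C, c ≠ 0 ∧ hammingNorm c = d}) ⟨_, c, hc, hc0, rfl⟩

theorem stmt19_general {n : ℕ} [NeZero n] (hp : n.Prime)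
    {E : Type*} [Field E] (f : ZMod 2 →+* E) (α : E) (hα : IsPrimitiveRoot α n)
    (T1 : Set (ZMod n))
    (hT1 : T1 = {x : ZMod n | ∃ a : ZMod n, a ≠ 0 ∧ x = a ^ 2})
    (C1 : Submodule (ZMod 2) (ZMod n → ZMod 2))
    (h1 : IsShiftClosed (C1 : Set (ZMod n → ZMod 2)))
    (hn1 : nonzeroes f α (C1 : Set (ZMod n → ZMod 2)) = T1) :
    Module.finrank (ZMod 2) ↥C1 = (n - 1) / 2 ∧
    n ≤ (minDist (C1 : Set (ZMod n → ZMod 2))) ^ 2 := by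
  have : Fact n.Prime := ⟨hp⟩
  have : CharP E 2 := charP_of_injective_ringHom f.injective 2
  subst hT1
  refine ⟨by rw [finrank_eq_ncard_nonzeroes f hα h1, hn1,
    ZMod.ncard_nonzero_squares hα.ne_two_of_charP_two], ?_⟩
  have hspec : ∀ c ∈ C1, ∀ j, cEval f α c j ≠ 0 → j ≠ 0 ∧ IsSquare j := fun c hc j hj => by
    obtain ⟨a, ha, rfl⟩ : j ∈ {x : ZMod n | ∃ a, a ≠ 0 ∧ x = a ^ 2} := hn1 ▸ ⟨c, hc, hj⟩
    exact ⟨pow_ne_zero 2 ha, a, sq a⟩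
  have hnonzero : ∃ c ∈ (C1 : Set (ZMod n → ZMod 2)), c ≠ 0 := by
    obtain ⟨c, hc, hc1⟩ : (1 : ZMod n) ∈ nonzeroes f α (C1 : Set (ZMod n → ZMod 2)) :=
      hn1 ▸ ⟨1, one_ne_zero, (one_pow 2).symm⟩
    exact ⟨c, hc, by rintro rfl; simp [cEval] at hc1⟩
  obtain ⟨c, hc, hc0, hcd⟩ := exists_hammingNorm_eq_minDist hnonzero
  rw [← hcd]
  exact le_sq_hammingNorm_of_cEval_ne_zero f hα hc0 (hspec c hc)

/-- for prime `n ≡ ±1 (mod 8)`, the binary quadratic residue code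
`C₁` with non-zero set the quadratic residues has dimension `(n-1)/2` and its
minimum distance satisfies the square-root bound `d(C₁)² ≥ n`. -/
theorem stmt19 {n : ℕ} [NeZero n] (hp : n.Prime) (h8 : n % 8 = 1 ∨ n % 8 = 7)
    {E : Type*} [Field E] (f : ZMod 2 →+* E) (α : E) (hα : IsPrimitiveRoot α n)
    (T1 : Set (ZMod n))
    (hT1 : T1 = {x : ZMod n | ∃ a : ZMod n, a ≠ 0 ∧ x = a ^ 2})
    (C1 : Submodule (ZMod 2) (ZMod n → ZMod 2))
    (h1 : IsShiftClosed (C1 : Set (ZMod n → ZMod 2)))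
    (hn1 : nonzeroes f α (C1 : Set (ZMod n → ZMod 2)) = T1) :
    Module.finrank (ZMod 2) ↥C1 = (n - 1) / 2 ∧
    n ≤ (minDist (C1 : Set (ZMod n → ZMod 2))) ^ 2 :=
  stmt19_general hp f α hα T1 hT1 C1 h1 hn1
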